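/- arXiv:2110.15566 — 2 statements merged into one kernel-verified Lean document; each statement's English description precedes it below -/
import Mathlib

section
/- As formal power series: sum over n ≥ 0 and 0 ≤ k ≤ n of ([n choose k]_t / (t;t)_k) x^n equals the sum over all partitions with zeros λ of t^{|λ| - σ_1(λ)²} x^{ℓ(λ)}, where σ_1(λ) is the side length of the Durfee square of λ. -/
/-- The side length of the Durfee square of a partition with zeros
`(f 0 ≥ f 1 ≥ … ≥ f (ℓ-1) ≥ 0)`: the number of indices `i` (0-indexed) with `f i > i`,
i.e. the largest `k` with `λ_k ≥ k` (1-indexed). -/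
def durfeeSide {ℓ : ℕ} (f : Fin ℓ → ℕ) : ℕ :=
  (Finset.univ.filter fun i : Fin ℓ => (i : ℕ) < f i).card

/-!
Durfee decomposition. A nonincreasing `f` of length `n` with Durfee side `k` is determined by
its first `k` entries minus `k` (an arbitrary nonincreasing tuple of length `k`, counted by
`1 / (t;t)_k`) and its last `n - k` entries (a nonincreasing tuple bounded by `k`, counted by
the Gaussian binomial `[n choose k]_t`); the `k × k` square accounts for `t^{k²}`. Both
generating functions are identified through the q-Pascal recursions obtained by removing the
last entry: either it is `0`, or all entries are positive and we subtract `1` from each.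
-/

open PowerSeries Finset

section

variable (R : Type*) [CommRing R]

noncomputable def tupleSeries (k : ℕ) (P : (Fin k → ℕ) → Prop) : R⟦X⟧ :=
  mk fun m => Nat.card {f : Fin k → ℕ // P f ∧ ∑ i, f i = m}

variable {R}

theorem coeff_tupleSeries {k : ℕ} (P : (Fin k → ℕ) → Prop) [DecidablePred P] (m : ℕ) :
    coeff m (tupleSeries R k P) = #{f ∈ Nat.antidiagonalTuple k m | P f} := by
  rw [tupleSeries, coeff_mk, Nat.subtype_card _ fun f =>
    (mem_filter.trans (and_comm.trans (and_congr_right' Nat.mem_antidiagonalTuple)))]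

theorem tupleSeries_congr {k : ℕ} {P Q : (Fin k → ℕ) → Prop} (h : ∀ f, P f ↔ Q f) :
    tupleSeries R k P = tupleSeries R k Q := by
  rw [show P = Q from funext fun f => propext (h f)]

theorem tupleSeries_eq_one {k : ℕ} {P : (Fin k → ℕ) → Prop} (h : ∀ f, P f ↔ f = 0) :
    tupleSeries R k P = 1 := by
  classical
  ext m
  rw [coeff_tupleSeries, filter_congr fun f _ => h f, filter_eq', coeff_one]
  by_cases hm : m = 0 <;> simp [Nat.mem_antidiagonalTuple, hm, eq_comm]

theorem tupleSeries_and_add_tupleSeries_and_not {k : ℕ} (P Q : (Fin k → ℕ) → Prop) :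
    tupleSeries R k (fun f => P f ∧ Q f) + tupleSeries R k (fun f => P f ∧ ¬ Q f) =
      tupleSeries R k P := by
  classical
  ext m
  rw [map_add, coeff_tupleSeries, coeff_tupleSeries, coeff_tupleSeries, ← Nat.cast_add,
    ← filter_filter, ← filter_filter, card_filter_add_card_filter_not]

theorem tupleSeries_mul {a b : ℕ} (P : (Fin a → ℕ) → Prop) (Q : (Fin b → ℕ) → Prop) :
    tupleSeries R a P * tupleSeries R b Q =
      tupleSeries R (a + b)
        (fun f => P (fun i => f (Fin.castAdd b i)) ∧ Q (fun j => f (Fin.natAdd a j))) := by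
  classical
  ext m
  let sums (f : Fin (a + b) → ℕ) : ℕ × ℕ :=
    (∑ i, f (Fin.castAdd b i), ∑ j, f (Fin.natAdd a j))
  rw [coeff_mul, coeff_tupleSeries, card_eq_sum_card_fiberwise (f := sums) (t := antidiagonal m)]
  · push_cast
    refine sum_congr rfl fun p hp => ?_
    rw [coeff_tupleSeries, coeff_tupleSeries, ← Nat.cast_mul, ← card_product]
    congr 1
    refine card_equiv (Fin.appendEquiv a b) fun gh => ?_
    rw [HasAntidiagonal.mem_antidiagonal] at hp
    simp only [mem_product, mem_filter, Nat.mem_antidiagonalTuple, Prod.ext_iff,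
      Fin.appendEquiv_apply, Fin.sum_univ_add, Fin.append_left, Fin.append_right, sums]
    grind
  · intro f hf
    simp_all [sums, Nat.mem_antidiagonalTuple, Fin.sum_univ_add]

theorem X_pow_mul_tupleSeries {k : ℕ} (c : ℕ) (P : (Fin k → ℕ) → Prop) :
    X ^ (k * c) * tupleSeries R k P =
      tupleSeries R k (fun f => (∀ i, c ≤ f i) ∧ P (fun i => f i - c)) := by
  classical
  ext m
  have sum_add_const (g : Fin k → ℕ) : ∑ i, (g i + c) = ∑ i, g i + k * c := by
    simp [sum_add_distrib]
  rw [coeff_X_pow_mul', coeff_tupleSeries, coeff_tupleSeries]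
  split_ifs with hm
  · congr 1
    refine card_nbij' (fun g i => g i + c) (fun f i => f i - c) ?_ ?_ ?_ ?_
    · intro g hg
      simp_all [Nat.mem_antidiagonalTuple]
    · intro f hf
      simp only [coe_filter, Nat.mem_antidiagonalTuple, Set.mem_ofPred_eq] at hf ⊢
      have := sum_add_const fun i => f i - c
      simp only [Nat.sub_add_cancel (hf.2.1 _)] at this
      exact ⟨by omega, hf.2.2⟩
    · intro g _
      funext i
      exact Nat.add_sub_cancel (g i) c
    · intro f hf
      simp only [coe_filter, Set.mem_ofPred_eq] at hf
      funext i
      simp [Nat.sub_add_cancel (hf.2.1 i)]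
  · rw [filter_eq_empty_iff.2, card_empty, Nat.cast_zero]
    rintro f hf ⟨hc, -⟩
    have := card_nsmul_le_sum univ f c fun i _ => hc i
    rw [card_univ, Fintype.card_fin, smul_eq_mul, Nat.mem_antidiagonalTuple.1 hf] at this
    omega

theorem antitone_tsub_const_iff {ι : Type*} [Preorder ι] {f : ι → ℕ} {c : ℕ}
    (hc : ∀ i, c ≤ f i) : Antitone (fun i => f i - c) ↔ Antitone f :=
  ⟨fun h i _ hij => (tsub_le_tsub_iff_right (hc i)).1 (h hij),
    fun h _ _ hij => Nat.sub_le_sub_right (h hij) c⟩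

theorem Fin.antitone_add_iff {α : Type*} [Preorder α] {a b : ℕ} (f : Fin (a + b) → α) :
    Antitone f ↔ (Antitone fun i => f (Fin.castAdd b i)) ∧
      (Antitone fun j => f (Fin.natAdd a j)) ∧
        ∀ i j, f (Fin.natAdd a j) ≤ f (Fin.castAdd b i) := by
  refine ⟨fun hf => ⟨hf.comp_monotone (Fin.strictMono_castAdd b).monotone,
    hf.comp_monotone (Fin.strictMono_natAdd a).monotone, fun i j => hf ?_⟩, ?_⟩
  · simp only [Fin.le_def, Fin.val_castAdd, Fin.val_natAdd]
    omega
  rintro ⟨hL, hR, hLR⟩ i j hij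
  induction i using Fin.addCases with
  | left i =>
    induction j using Fin.addCases with
    | left j => exact hL ((Fin.strictMono_castAdd b).le_iff_le.1 hij)
    | right j => exact hLR i j
  | right i =>
    induction j using Fin.addCases with
    | left j =>
      simp only [Fin.le_def, Fin.val_natAdd, Fin.val_castAdd] at hij
      omega
    | right j => exact hR ((Fin.strictMono_natAdd a).le_iff_le.1 hij)

theorem antitone_and_last_eq_zero_iff {k : ℕ} (f : Fin (k + 1) → ℕ) :
    Antitone f ∧ f (Fin.last k) = 0 ↔
      Antitone (fun i => f (Fin.castAdd 1 i)) ∧ (fun j => f (Fin.natAdd k j)) = 0 := by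
  rw [Fin.antitone_add_iff, funext_iff, Fin.forall_fin_one]
  exact ⟨fun ⟨⟨hL, _⟩, h⟩ => ⟨hL, h⟩,
    fun ⟨hL, h⟩ =>
      ⟨⟨hL, Subsingleton.antitone _, fun i j => by simp [Subsingleton.elim j 0, h]⟩, h⟩⟩

theorem antitone_and_last_ne_zero_iff {k : ℕ} (f : Fin (k + 1) → ℕ) :
    Antitone f ∧ f (Fin.last k) ≠ 0 ↔ (∀ i, 1 ≤ f i) ∧ Antitone (fun i => f i - 1) := by
  refine ⟨fun ⟨hf, h⟩ => ?_, fun ⟨hpos, hf⟩ =>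
    ⟨(antitone_tsub_const_iff hpos).1 hf, Nat.one_le_iff_ne_zero.1 (hpos _)⟩⟩
  have hpos (i : Fin (k + 1)) : 1 ≤ f i := (Nat.one_le_iff_ne_zero.2 h).trans (hf (Fin.le_last i))
  exact ⟨hpos, (antitone_tsub_const_iff hpos).2 hf⟩

variable (R)

noncomputable def qPochhammer (k : ℕ) : R⟦X⟧ := ∏ i ∈ range k, (1 - X ^ (i + 1))

noncomputable def antitoneSeries (k : ℕ) : R⟦X⟧ := tupleSeries R k Antitone

noncomputable def boxSeries (a b : ℕ) : R⟦X⟧ :=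
  tupleSeries R a fun f => Antitone f ∧ ∀ i, f i ≤ b

variable {R}

theorem qPochhammer_succ (k : ℕ) : qPochhammer R (k + 1) = qPochhammer R k * (1 - X ^ (k + 1)) :=
  prod_range_succ _ k

theorem constantCoeff_qPochhammer (k : ℕ) : constantCoeff (qPochhammer R k) = 1 := by
  simp [qPochhammer, map_prod]

theorem tupleSeries_zero_tuple (k : ℕ) : tupleSeries R k (· = 0) = 1 :=
  tupleSeries_eq_one fun _ => Iff.rfl

theorem antitoneSeries_zero : antitoneSeries R 0 = 1 :=
  tupleSeries_eq_one fun f => iff_of_true (Subsingleton.antitone f) (Subsingleton.elim f 0)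

theorem boxSeries_zero_left (b : ℕ) : boxSeries R 0 b = 1 :=
  tupleSeries_eq_one fun f => iff_of_true ⟨Subsingleton.antitone f, fun i => i.elim0⟩
    (Subsingleton.elim f 0)

theorem boxSeries_zero_right (a : ℕ) : boxSeries R a 0 = 1 :=
  tupleSeries_eq_one fun f => ⟨fun ⟨_, h⟩ => funext fun i => Nat.le_zero.1 (h i),
    by rintro rfl; exact ⟨antitone_const, fun _ => le_rfl⟩⟩

theorem antitoneSeries_succ (k : ℕ) :
    antitoneSeries R (k + 1) = antitoneSeries R k + X ^ (k + 1) * antitoneSeries R (k + 1) := by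
  have last_eq_zero : tupleSeries R (k + 1) (fun f => Antitone f ∧ f (Fin.last k) = 0) =
      antitoneSeries R k := by
    rw [antitoneSeries, ← mul_one (tupleSeries R k _), ← tupleSeries_zero_tuple 1,
      tupleSeries_mul]
    exact tupleSeries_congr antitone_and_last_eq_zero_iff
  have last_ne_zero : tupleSeries R (k + 1) (fun f => Antitone f ∧ ¬ f (Fin.last k) = 0) =
      X ^ (k + 1) * antitoneSeries R (k + 1) := by
    have shift := X_pow_mul_tupleSeries (R := R) (k := k + 1) 1 Antitone
    rw [mul_one] at shift
    rw [antitoneSeries, shift]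
    exact tupleSeries_congr antitone_and_last_ne_zero_iff
  rw [← last_eq_zero, ← last_ne_zero]
  exact (tupleSeries_and_add_tupleSeries_and_not _ _).symm

theorem boxSeries_succ_succ (a b : ℕ) :
    boxSeries R (a + 1) (b + 1) = boxSeries R a (b + 1) + X ^ (a + 1) * boxSeries R (a + 1) b := by
  have last_eq_zero : tupleSeries R (a + 1)
      (fun f => (Antitone f ∧ ∀ i, f i ≤ b + 1) ∧ f (Fin.last a) = 0) =
        boxSeries R a (b + 1) := by
    rw [boxSeries, ← mul_one (tupleSeries R a _), ← tupleSeries_zero_tuple 1,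
      tupleSeries_mul]
    refine tupleSeries_congr fun f => ?_
    rw [and_right_comm, antitone_and_last_eq_zero_iff, Fin.forall_fin_add, funext_iff,
      Fin.forall_fin_one, Fin.forall_fin_one, Pi.zero_apply]
    exact ⟨fun ⟨⟨hL, h0⟩, hb, _⟩ => ⟨⟨hL, hb⟩, h0⟩,
      fun ⟨⟨hL, hb⟩, h0⟩ => ⟨⟨hL, h0⟩, hb, h0.trans_le (Nat.zero_le _)⟩⟩
  have last_ne_zero : tupleSeries R (a + 1)
      (fun f => (Antitone f ∧ ∀ i, f i ≤ b + 1) ∧ ¬ f (Fin.last a) = 0) =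
      X ^ (a + 1) * boxSeries R (a + 1) b := by
    have shift :=
      X_pow_mul_tupleSeries (R := R) (k := a + 1) 1 fun f => Antitone f ∧ ∀ i, f i ≤ b
    rw [mul_one] at shift
    rw [boxSeries, shift]
    refine tupleSeries_congr fun f => ?_
    rw [and_right_comm, antitone_and_last_ne_zero_iff]
    simp only [Nat.sub_le_iff_le_add]
    tauto
  rw [← last_eq_zero, ← last_ne_zero]
  exact (tupleSeries_and_add_tupleSeries_and_not _ _).symm

theorem antitoneSeries_mul_qPochhammer (k : ℕ) : antitoneSeries R k * qPochhammer R k = 1 := by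
  induction k with
  | zero => simp [antitoneSeries_zero, qPochhammer]
  | succ k ih =>
    rw [qPochhammer_succ]
    linear_combination qPochhammer R k * antitoneSeries_succ (R := R) k + ih

theorem boxSeries_mul_qPochhammer (a b : ℕ) :
    boxSeries R a b * (qPochhammer R a * qPochhammer R b) = qPochhammer R (a + b) := by
  induction a generalizing b with
  | zero => simp [boxSeries_zero_left, qPochhammer]
  | succ a iha =>
    induction b with
    | zero => simp [boxSeries_zero_right, qPochhammer]
    | succ b ihb =>
      have h₁ := iha (b + 1)
      rw [show a + (b + 1) = a + b + 1 by ring, qPochhammer_succ b] at h₁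
      rw [show a + 1 + b = a + b + 1 by ring, qPochhammer_succ a] at ihb
      rw [boxSeries_succ_succ, qPochhammer_succ a, qPochhammer_succ b,
        show a + 1 + (b + 1) = a + b + 1 + 1 by ring, qPochhammer_succ (a + b + 1)]
      linear_combination (1 - X ^ (a + 1)) * h₁ + X ^ (a + 1) * (1 - X ^ (b + 1)) * ihb

section Durfee

variable {n : ℕ} {f : Fin n → ℕ}

theorem durfeeSide_le_length (f : Fin n → ℕ) : durfeeSide f ≤ n :=
  (card_filter_le _ _).trans_eq (card_fin n)

theorem lt_durfeeSide_iff (hf : Antitone f) (i : Fin n) :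
    (i : ℕ) < durfeeSide f ↔ (i : ℕ) < f i :=
  Fin.lt_card_filter_univ_iff_apply_of_imp (fun j : Fin n => (j : ℕ) < f j)
    fun _ _ hji hi => (Fin.le_def.1 hji).trans_lt (hi.trans_le (hf hji))

theorem durfeeSide_le_apply (hf : Antitone f) {i : Fin n} (hi : (i : ℕ) < durfeeSide f) :
    durfeeSide f ≤ f i := by
  have hd := durfeeSide_le_length f
  let j : Fin n := ⟨durfeeSide f - 1, by omega⟩
  have hj : durfeeSide f - 1 < f j :=
    (lt_durfeeSide_iff hf j).1 (show durfeeSide f - 1 < durfeeSide f by omega)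
  have hij : f j ≤ f i := hf (Fin.le_def.2 (show (i : ℕ) ≤ durfeeSide f - 1 by omega))
  omega

theorem apply_le_durfeeSide (hf : Antitone f) {i : Fin n} (hi : durfeeSide f ≤ i) :
    f i ≤ durfeeSide f := by
  let j : Fin n := ⟨durfeeSide f, hi.trans_lt i.2⟩
  have hj : ¬ durfeeSide f < f j := fun h => lt_irrefl _ ((lt_durfeeSide_iff hf j).2 h)
  have hij : f i ≤ f j := hf (Fin.le_def.2 hi)
  omega

end Durfee

theorem antitone_and_durfeeSide_eq_iff {k r : ℕ} (f : Fin (k + r) → ℕ) :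
    Antitone f ∧ durfeeSide f = k ↔
      ((Antitone fun i => f (Fin.castAdd r i)) ∧ ∀ i, k ≤ f (Fin.castAdd r i)) ∧
        ((Antitone fun j => f (Fin.natAdd k j)) ∧ ∀ j, f (Fin.natAdd k j) ≤ k) := by
  constructor
  · rintro ⟨hf, hd⟩
    obtain ⟨hL, hR, -⟩ := (Fin.antitone_add_iff f).1 hf
    refine ⟨⟨hL, fun i => ?_⟩, hR, fun j => ?_⟩
    · simpa [hd] using durfeeSide_le_apply hf (i := Fin.castAdd r i) (by simp [hd])
    · simpa [hd] using apply_le_durfeeSide hf (i := Fin.natAdd k j) (by simp [hd])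
  · rintro ⟨⟨hL, hk⟩, hR, hk'⟩
    refine ⟨(Fin.antitone_add_iff f).2 ⟨hL, hR, fun i j => (hk' j).trans (hk i)⟩, ?_⟩
    have key : ∀ i : Fin (k + r), (i : ℕ) < f i ↔ (i : ℕ) < k := by
      intro i
      induction i using Fin.addCases with
      | left i => simpa using (hk i).trans_lt' i.2
      | right j =>
        simp only [Fin.val_natAdd, add_lt_iff_neg_left, not_lt_zero, iff_false, not_lt]
        exact (hk' j).trans (Nat.le_add_right k j)
    rw [durfeeSide, filter_congr fun i _ => key i, Fin.card_filter_val_lt]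
    omega

theorem tupleSeries_durfeeSide_eq (k r : ℕ) :
    tupleSeries R (k + r) (fun f => Antitone f ∧ durfeeSide f = k) =
      X ^ (k * k) * antitoneSeries R k * boxSeries R r k := by
  rw [antitoneSeries, X_pow_mul_tupleSeries, boxSeries, tupleSeries_mul]
  refine tupleSeries_congr fun f => ?_
  rw [antitone_and_durfeeSide_eq_iff]
  exact and_congr_left' ⟨fun ⟨hL, hk⟩ => ⟨hk, (antitone_tsub_const_iff hk).2 hL⟩,
    fun ⟨hk, hL⟩ => ⟨(antitone_tsub_const_iff hk).1 hL, hk⟩⟩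

theorem sum_antitoneSeries_mul_boxSeries (n : ℕ) :
    ∑ k ∈ range (n + 1), antitoneSeries R k * boxSeries R (n - k) k =
      mk fun m =>
        (Nat.card {f : Fin n → ℕ // Antitone f ∧ ∑ i, f i = m + durfeeSide f ^ 2} : R) := by
  classical
  ext m
  let layer (k : ℕ) : Finset (Fin n → ℕ) :=
    {f ∈ Nat.antidiagonalTuple n (m + k ^ 2) | Antitone f ∧ durfeeSide f = k}
  have coeff_layer : ∀ k ∈ range (n + 1),
      coeff m (antitoneSeries R k * boxSeries R (n - k) k) = #(layer k) := by
    intro k hk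
    obtain ⟨r, rfl⟩ := Nat.exists_eq_add_of_le (Nat.lt_succ_iff.1 (mem_range.1 hk))
    rw [Nat.add_sub_cancel_left, ← coeff_X_pow_mul _ (k * k), ← mul_assoc,
      ← tupleSeries_durfeeSide_eq, coeff_tupleSeries, ← sq]
  have layers_disjoint : (range (n + 1) : Set ℕ).PairwiseDisjoint layer := by
    intro k _ k' _ hkk'
    simp only [Function.onFun, disjoint_left, layer, mem_filter]
    rintro f ⟨-, -, rfl⟩ ⟨-, -, rfl⟩
    exact hkk' rfl
  rw [map_sum, sum_congr rfl coeff_layer, coeff_mk, ← Nat.cast_sum,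
    ← card_biUnion layers_disjoint, Nat.subtype_card]
  intro f
  simp only [mem_biUnion, mem_range, layer, mem_filter, Nat.mem_antidiagonalTuple]
  constructor
  · rintro ⟨k, -, hs, ha, rfl⟩
    exact ⟨ha, hs⟩
  · rintro ⟨ha, hs⟩
    exact ⟨durfeeSide f, Nat.lt_succ_of_le (durfeeSide_le_length f), hs, ha, rfl⟩

end

theorem qPochhammer_div_eq_boxSeries_mul_antitoneSeries {n k : ℕ} (hk : k ≤ n) :
    qPochhammer ℚ n * (qPochhammer ℚ k * qPochhammer ℚ (n - k))⁻¹ *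
        (qPochhammer ℚ k)⁻¹ = antitoneSeries ℚ k * boxSeries ℚ (n - k) k := by
  have hunit (j : ℕ) : constantCoeff (qPochhammer ℚ j) ≠ 0 := by
    rw [constantCoeff_qPochhammer]; exact one_ne_zero
  have hbox : qPochhammer ℚ n * (qPochhammer ℚ k * qPochhammer ℚ (n - k))⁻¹ =
      boxSeries ℚ (n - k) k := by
    rw [eq_comm, eq_mul_inv_iff_mul_eq (by rw [map_mul]; exact mul_ne_zero (hunit k) (hunit _)),
      mul_comm (qPochhammer ℚ k), boxSeries_mul_qPochhammer, Nat.sub_add_cancel hk]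
  rw [hbox, (inv_eq_iff_mul_eq_one (hunit k)).2 (antitoneSeries_mul_qPochhammer k), mul_comm]

/-- As formal power series in `t` (inner variable) and `x` (outer variable):
`∑_{n≥0} (∑_{k=0}^n [n choose k]_t / (t;t)_k) x^n
  = ∑_{λ w/ 0} t^{|λ| - σ₁(λ)²} x^{ℓ(λ)}`,
where the right-hand sum is over all partitions with zeros and `σ₁` is the Durfee square
side; its coefficient of `x^ℓ t^m` counts nonincreasing sequences `f` of length `ℓ` with
`∑ f = m + σ₁(f)²`. -/
theorem stmt_8 :
    PowerSeries.mk (fun n => ∑ k ∈ Finset.range (n + 1),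
        ((∏ i ∈ Finset.range n, (1 - (PowerSeries.X : PowerSeries ℚ) ^ (i + 1))) *
          ((∏ i ∈ Finset.range k, (1 - (PowerSeries.X : PowerSeries ℚ) ^ (i + 1))) *
            ∏ i ∈ Finset.range (n - k),
              (1 - (PowerSeries.X : PowerSeries ℚ) ^ (i + 1)))⁻¹) *
        (∏ i ∈ Finset.range k, (1 - (PowerSeries.X : PowerSeries ℚ) ^ (i + 1)))⁻¹) =
    PowerSeries.mk (fun ℓ => PowerSeries.mk (fun m =>
        (Nat.card {f : Fin ℓ → ℕ //
            (∀ i j, i ≤ j → f j ≤ f i) ∧ ∑ i, f i = m + (durfeeSide f) ^ 2} : ℚ))) := by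
  congr 1
  funext n
  refine (sum_congr rfl fun k hk => ?_).trans (sum_antitoneSeries_mul_boxSeries n)
  exact qPochhammer_div_eq_boxSeries_mul_antitoneSeries (Nat.lt_succ_iff.1 (mem_range.1 hk))
end

section
/- For fixed 0 < t < 1, H(-1;t) = (-t;t)_∞ · (-t;t²)_∞, where H(x;t) = sum over k ≥ 0 of t^{k²} x^{2k} / (t;t)_k times ∏_{j ≥ k+1}(1 - t^j x). -/
/-!
For `|q| < 1`, Euler's series `F x = ∑ q^(n choose 2) x^n / (q;q)_n` converges for every `x`
(ratio test), satisfies `F x = (1 + x) F (q x)` and is continuous at `0` with `F 0 = 1`; iterating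
the functional equation gives Euler's identity `F x = ∏ (1 + x q^i)`.

In `H(-1;t)` the tail `∏_{j>k} (1 + t^j)` is `(-t;t)_∞ / (-t;t)_k`, and
`(t;t)_k (-t;t)_k = (t²;t²)_k`, so `H(-1;t) = (-t;t)_∞ ∑ t^(k²) / (t²;t²)_k`; the last sum is
Euler's series for `q = t²` at `x = t`, i.e. `(-t;t²)_∞`.
-/

open Finset Filter Topology

noncomputable def eulerCoeff (q : ℝ) (n : ℕ) : ℝ :=
  q ^ n.choose 2 / ∏ i ∈ range n, (1 - q ^ (i + 1))

noncomputable def eulerSeries (q x : ℝ) : ℝ :=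
  ∑' n, eulerCoeff q n * x ^ n

lemma eulerSeries_zero (q : ℝ) : eulerSeries q 0 = 1 := by
  rw [eulerSeries, tsum_eq_single 0 fun n hn => by simp [hn]]
  simp [eulerCoeff]

section EulerSeries

variable {q : ℝ} (hq : |q| < 1)
include hq

lemma one_sub_abs_le_abs_one_sub_pow_succ (n : ℕ) : 1 - |q| ≤ |1 - q ^ (n + 1)| := by
  have hpow : |q| ^ (n + 1) ≤ |q| := pow_le_of_le_one (abs_nonneg q) hq.le n.succ_ne_zero
  calc 1 - |q| ≤ |1| - |q ^ (n + 1)| := by rw [abs_one, abs_pow]; linarith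
    _ ≤ |1 - q ^ (n + 1)| := abs_sub_abs_le_abs_sub _ _

lemma one_sub_pow_succ_ne_zero (n : ℕ) : 1 - q ^ (n + 1) ≠ 0 :=
  abs_pos.1 <| (sub_pos.2 hq).trans_le (one_sub_abs_le_abs_one_sub_pow_succ hq n)

lemma eulerCoeff_succ_mul (n : ℕ) :
    eulerCoeff q (n + 1) * (1 - q ^ (n + 1)) = q ^ n * eulerCoeff q n := by
  have hprod : ∏ i ∈ range n, (1 - q ^ (i + 1)) ≠ 0 :=
    prod_ne_zero_iff.2 fun i _ => one_sub_pow_succ_ne_zero hq i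
  rw [eulerCoeff, eulerCoeff, prod_range_succ, Nat.choose_succ_succ', Nat.choose_one_right,
    pow_add]
  field_simp [one_sub_pow_succ_ne_zero hq n]

lemma abs_eulerCoeff_succ_le (n : ℕ) :
    |eulerCoeff q (n + 1)| ≤ |q| ^ n / (1 - |q|) * |eulerCoeff q n| := by
  have hgap : 0 < 1 - |q| := sub_pos.2 hq
  have hrec := congrArg abs (eulerCoeff_succ_mul hq n)
  rw [abs_mul, abs_mul, abs_pow] at hrec
  rw [div_mul_eq_mul_div, le_div_iff₀ hgap, ← hrec]
  exact mul_le_mul_of_nonneg_left (one_sub_abs_le_abs_one_sub_pow_succ hq n) (abs_nonneg _)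

lemma summable_abs_eulerCoeff_mul_pow {r : ℝ} (hr : 0 ≤ r) :
    Summable fun n => |eulerCoeff q n| * r ^ n := by
  have hsmall : Tendsto (fun n : ℕ => |q| ^ n / (1 - |q|) * r) atTop (𝓝 0) := by
    simpa using ((tendsto_pow_atTop_nhds_zero_of_lt_one (abs_nonneg q) hq).div_const
      (1 - |q|)).mul_const r
  refine summable_of_ratio_norm_eventually_le (r := 1 / 2) (by norm_num) ?_
  filter_upwards [hsmall.eventually_le_const (by norm_num : (0 : ℝ) < 1 / 2)] with n hn
  rw [Real.norm_of_nonneg (by positivity), Real.norm_of_nonneg (by positivity), pow_succ]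
  calc |eulerCoeff q (n + 1)| * (r ^ n * r)
      ≤ |q| ^ n / (1 - |q|) * |eulerCoeff q n| * (r ^ n * r) := by
        gcongr; exact abs_eulerCoeff_succ_le hq n
    _ = (|q| ^ n / (1 - |q|) * r) * (|eulerCoeff q n| * r ^ n) := by ring
    _ ≤ 1 / 2 * (|eulerCoeff q n| * r ^ n) := by gcongr

lemma summable_eulerCoeff_mul_pow (x : ℝ) : Summable fun n => eulerCoeff q n * x ^ n :=
  Summable.of_norm <| by
    simpa only [Real.norm_eq_abs, abs_mul, abs_pow] using
      summable_abs_eulerCoeff_mul_pow hq (abs_nonneg x)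

/-- By `eulerCoeff_succ_mul`, the `(n + 1)`-st term of `F x - F (q x)` is the `n`-th term of
`x F (q x)`. -/
lemma eulerSeries_eq_one_add_mul (x : ℝ) :
    eulerSeries q x = (1 + x) * eulerSeries q (q * x) := by
  have hx := summable_eulerCoeff_mul_pow hq x
  have hqx := summable_eulerCoeff_mul_pow hq (q * x)
  have hdiff := hx.sub hqx
  have hshift : ∀ n, eulerCoeff q (n + 1) * x ^ (n + 1) - eulerCoeff q (n + 1) * (q * x) ^ (n + 1)
      = x * (eulerCoeff q n * (q * x) ^ n) := fun n => by
    linear_combination x ^ (n + 1) * eulerCoeff_succ_mul hq n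
  have key : eulerSeries q x - eulerSeries q (q * x) = x * eulerSeries q (q * x) := by
    rw [eulerSeries, eulerSeries, ← hx.tsum_sub hqx, hdiff.tsum_eq_zero_add,
      tsum_congr hshift, tsum_mul_left]
    simp
  linear_combination key

lemma eulerSeries_eq_prod_mul (x : ℝ) (N : ℕ) :
    eulerSeries q x = (∏ i ∈ range N, (1 + x * q ^ i)) * eulerSeries q (q ^ N * x) := by
  induction N with
  | zero => simp
  | succ N ih =>
    rw [ih, eulerSeries_eq_one_add_mul hq, prod_range_succ, pow_succ']
    ring_nf

lemma tendsto_eulerSeries_nhds_zero : Tendsto (eulerSeries q) (𝓝 0) (𝓝 1) := by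
  have hlim : ∀ n, Tendsto (fun y => eulerCoeff q n * y ^ n) (𝓝 0) (𝓝 (eulerCoeff q n * 0 ^ n)) :=
    fun n => ((continuous_pow n).tendsto 0).const_mul _
  have hbound : ∀ᶠ y in 𝓝 (0 : ℝ), ∀ n, ‖eulerCoeff q n * y ^ n‖ ≤ |eulerCoeff q n| * 1 ^ n := by
    filter_upwards [Metric.closedBall_mem_nhds (0 : ℝ) one_pos] with y hy n
    rw [Real.norm_eq_abs, abs_mul, abs_pow]
    gcongr
    simpa using hy
  rw [← eulerSeries_zero q]
  exact tendsto_tsum_of_dominated_convergence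
    (summable_abs_eulerCoeff_mul_pow hq zero_le_one) hlim hbound

theorem hasProd_one_add_mul_pow (x : ℝ) :
    HasProd (fun i => 1 + x * q ^ i) (eulerSeries q x) := by
  have hmul : Multipliable fun i => 1 + x * q ^ i :=
    Real.multipliable_one_add_of_summable ((summable_geometric_of_abs_lt_one hq).mul_left x)
  have htail : Tendsto (fun N => eulerSeries q (q ^ N * x)) atTop (𝓝 1) :=
    (tendsto_eulerSeries_nhds_zero hq).comp <| by
      simpa using (tendsto_pow_atTop_nhds_zero_of_abs_lt_one hq).mul_const x
  have hlim := hmul.hasProd.tendsto_prod_nat.mul htail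
  simp_rw [← eulerSeries_eq_prod_mul hq, mul_one] at hlim
  rw [tendsto_nhds_unique tendsto_const_nhds hlim]
  exact hmul.hasProd

end EulerSeries

lemma two_mul_choose_two_add_self (k : ℕ) : 2 * k.choose 2 + k = k ^ 2 := by
  induction k with
  | zero => rfl
  | succ k ih => rw [Nat.choose_succ_succ', Nat.choose_one_right]; grind

lemma eulerCoeff_sq_mul_pow (q : ℝ) (k : ℕ) :
    eulerCoeff (q ^ 2) k * q ^ k =
      q ^ k ^ 2 / ((∏ i ∈ range k, (1 - q ^ (i + 1))) * ∏ i ∈ range k, (1 + q ^ (i + 1))) := by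
  rw [eulerCoeff, div_mul_eq_mul_div, ← pow_mul, ← pow_add, two_mul_choose_two_add_self,
    ← prod_mul_distrib]
  congr 2 with i
  ring

lemma pow_sq_div_mul_tprod_one_add_pow {q : ℝ} (hq : |q| < 1) (k : ℕ) :
    q ^ k ^ 2 / (∏ i ∈ range k, (1 - q ^ (i + 1))) * ∏' j : ℕ, (1 + q ^ (k + 1 + j)) =
      eulerCoeff (q ^ 2) k * q ^ k * ∏' i : ℕ, (1 + q ^ (i + 1)) := by
  have htail : Multipliable fun j : ℕ => 1 + q ^ (j + k + 1) := by
    refine Real.multipliable_one_add_of_summable ?_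
    simpa only [pow_add, mul_assoc] using
      (summable_geometric_of_abs_lt_one hq).mul_right (q ^ k * q ^ 1)
  have hhead : ∏ i ∈ range k, (1 + q ^ (i + 1)) ≠ 0 := prod_ne_zero_iff.2 fun i _ => by
    have : |q ^ (i + 1)| < 1 := by
      rw [abs_pow]; exact pow_lt_one₀ (abs_nonneg q) hq i.succ_ne_zero
    linarith [neg_abs_le (q ^ (i + 1))]
  rw [tprod_congr fun j => by rw [add_comm (k + 1) j, ← add_assoc],
    ← htail.prod_mul_tprod_nat_mul' (f := fun i => 1 + q ^ (i + 1)), eulerCoeff_sq_mul_pow]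
  field_simp

/-- For fixed `0 < t < 1`, `H(-1;t) = (-t;t)_∞ · (-t;t²)_∞`, where
`H(x;t) = ∑_{k≥0} t^{k²} x^{2k} / (t;t)_k · ∏_{j≥k+1} (1 - t^j x)`, evaluated at `x = -1`. -/
theorem stmt_16 (t : ℝ) (ht0 : 0 < t) (ht1 : t < 1) :
    ∑' k : ℕ, t ^ (k ^ 2) * (-1 : ℝ) ^ (2 * k) /
        (∏ i ∈ Finset.range k, (1 - t ^ (i + 1))) *
        ∏' j : ℕ, (1 - t ^ (k + 1 + j) * (-1)) =
      (∏' i : ℕ, (1 + t ^ (i + 1))) * ∏' i : ℕ, (1 + t ^ (2 * i + 1)) := by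
  have ht : |t| < 1 := abs_lt.2 ⟨by linarith, ht1⟩
  have ht2 : |t ^ 2| < 1 := by rw [abs_pow]; exact pow_lt_one₀ (abs_nonneg t) ht two_ne_zero
  have hodd : HasProd (fun i : ℕ => 1 + t ^ (2 * i + 1)) (eulerSeries (t ^ 2) t) := by
    convert hasProd_one_add_mul_pow ht2 t using 2 with i
    ring
  simp only [pow_mul, neg_one_sq, one_pow, mul_one, mul_neg, sub_neg_eq_add,
    pow_sq_div_mul_tprod_one_add_pow ht]
  rw [tsum_mul_right, hodd.tprod_eq, mul_comm]
  rfl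
end
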